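/- Let T be a p-string ending with a unique smallest end-marker $. Define L_T[i] = fce(T[R⁻¹(i)−1..]) (with T[0..] := $) where R⁻¹(i) is the start position of the lexicographically i-th p-encoded suffix, and define LF(i) = R(R⁻¹(i)−1) if R⁻¹(i) > 1, else LF(i) = R(|T|). Then for any 1 ≤ i < j ≤ |T| with L_T[i] = L_T[j], it holds that LF(i) < LF(j). -/

import Mathlib

/-- Symbols of a parameterized string: static symbols `s a` (from Σs) and
parameter symbols `p a` (from Σp). -/
inductive PSym where
  | s : ℕ → PSym
  | p : ℕ → PSym
deriving DecidableEq

/-- Symbols of a p-encoded string: static symbols, finite distances, and ∞. -/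
inductive Enc where
  | s : ℕ → Enc
  | fin : ℕ → Enc
  | inf : Enc
deriving DecidableEq

/-- Order embedding: static symbols < natural numbers < ∞. -/
def Enc.toPair : Enc → ℕ ×ₗ ℕ
  | .s a => toLex (0, a)
  | .fin d => toLex (1, d)
  | .inf => toLex (2, 0)

instance : LinearOrder Enc :=
  LinearOrder.lift' Enc.toPair (by
    rintro (a | a | _) (b | b | _) h <;>
      simp_all [Enc.toPair, toLex_inj, Prod.ext_iff])

/-- Largest position `j < i` (0-based) carrying the same symbol as position `i`. -/
def prevOcc (w : List PSym) (i : ℕ) : Option ℕ :=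
  ((List.range i).filter (fun j => w[j]? = w[i]?)).max?

/-- The p-encoding of position `i` (0-based) of `w`. -/
def pencSym (w : List PSym) (i : ℕ) : Enc :=
  match w[i]? with
  | some (PSym.s a) => Enc.s a
  | some (PSym.p _) =>
    match prevOcc w i with
    | some j => Enc.fin (i - j)
    | none => Enc.inf
  | none => Enc.inf

/-- The p-encoding ⟨w⟩ of a p-string `w`. -/
def penc (w : List PSym) : List Enc :=
  (List.range w.length).map (pencSym w)

/-- Lexicographic (strict) order on p-encoded strings. -/
def lexLt (x y : List Enc) : Prop := List.Lex (· < ·) x y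

def lexLe (x y : List Enc) : Prop := lexLt x y ∨ x = y

/-- Length of the longest common prefix. -/
def lcp {α : Type*} [DecidableEq α] : List α → List α → ℕ
  | a :: x, b :: y => if a = b then lcp x y + 1 else 0
  | _, _ => 0

/-- Number of ∞'s in the longest common prefix of two p-encoded strings. -/
def lcpInf (x y : List Enc) : ℕ := (x.take (lcp x y)).count Enc.inf

/-- Number of distinct p-symbols occurring in `w` (denoted |w|_p). -/
def distinctP (w : List PSym) : ℕ :=
  (w.filterMap (fun s => match s with | PSym.p a => some a | PSym.s _ => none)).dedup.length

/-- For `w` starting with a p-symbol: the rank of `w[1]` among the distinct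
p-symbols of `w[1..h+1]`, where `h+1 = min{|w|, second occurrence of w[1] in w}`. -/
def fceRank (w : List PSym) : ℕ :=
  match w with
  | [] => 0
  | c :: rest => distinctP ((c :: rest).take (min (c :: rest).length (2 + rest.idxOf c)))

/-- The function fce from the paper; `fce ε = $` is modelled as `Enc.s 0`. -/
def fce (w : List PSym) : Enc :=
  match w with
  | [] => Enc.s 0
  | PSym.s a :: _ => Enc.s a
  | w => Enc.fin (fceRank w)

/-!
Prepending a p-symbol `c` to a p-string `u` changes the p-encoding only at the head and at the
first occurrence of `c` in `u`, say at position `m`, where `∞` becomes the distance `m + 1`.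
Since the `∞`s of a prefix of `⟨u⟩` count its distinct p-symbols, that occurrence is the `∞` of
`⟨u⟩` preceded by exactly `fce (c :: u) - 1` other `∞`s. So for two suffixes with equal `fce`
the rewritten `∞`s coincide up to the first difference of `⟨u⟩` and `⟨v⟩`, and if the rewritten
`∞` of `⟨v⟩` is that first difference, its new value `m + 1` still beats the entry of `⟨u⟩`
there, a static symbol or a distance at most `m`. Hence prepending symbols of equal `fce`
preserves the order of suffixes, which is `LF i < LF j`; the suffix at position `0` cannot be
involved because `$` occurs only at the end of `T`.
-/

namespace Enc

theorem not_inf_lt (e : Enc) : ¬ Enc.inf < e := by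
  change ¬ Enc.inf.toPair < e.toPair
  cases e <;> simp [Enc.toPair, Prod.Lex.lt_iff]

theorem s_lt_fin (a d : ℕ) : Enc.s a < Enc.fin d := by
  change Enc.toPair _ < Enc.toPair _
  simp [Enc.toPair, Prod.Lex.lt_iff]

theorem fin_lt_fin {d e : ℕ} (h : d < e) : Enc.fin d < Enc.fin e := by
  change Enc.toPair _ < Enc.toPair _
  simp [Enc.toPair, Prod.Lex.lt_iff, h]

end Enc

namespace List

theorem mem_take_iff_getElem? {α : Type*} {l : List α} {a : α} {n : ℕ} :
    a ∈ l.take n ↔ ∃ j < n, l[j]? = some a := by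
  simp only [mem_iff_getElem?, getElem?_take]
  constructor
  · rintro ⟨j, hj⟩
    split_ifs at hj with hjn
    exact ⟨j, hjn, hj⟩
  · rintro ⟨j, hjn, hj⟩
    exact ⟨j, by rwa [if_pos hjn]⟩

variable {α : Type*} [DecidableEq α] {l : List α} {a : α} {i : ℕ}

theorem getElem?_ne_of_lt_idxOf (h : i < l.idxOf a) : l[i]? ≠ some a := by
  rw [getElem?_eq_getElem (h.trans_le idxOf_le_length), Ne, Option.some_inj]
  simpa using not_of_lt_findIdx h

theorem idxOf_eq_of_getElem? (h₁ : l[i]? = some a) (h₂ : ∀ j < i, l[j]? ≠ some a) :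
    l.idxOf a = i := by
  obtain ⟨hi, rfl⟩ := getElem?_eq_some_iff.mp h₁
  rcases lt_trichotomy (l.idxOf l[i]) i with h | h | h
  · exact absurd (getElem?_idxOf (idxOf_lt_length_iff.mp (h.trans hi))) (h₂ _ h)
  · exact h
  · exact absurd h₁ (getElem?_ne_of_lt_idxOf h)

theorem not_mem_take_idxOf (l : List α) (a : α) : a ∉ l.take (l.idxOf a) := fun h =>
  let ⟨_, hj, hj'⟩ := mem_take_iff_getElem?.mp h
  getElem?_ne_of_lt_idxOf hj hj'

end List

section PrevOcc

variable {w u : List PSym} {c : PSym} {i j : ℕ}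

theorem prevOcc_eq_some_iff :
    prevOcc w i = some j ↔ (j < i ∧ w[j]? = w[i]?) ∧ ∀ k < i, w[k]? = w[i]? → k ≤ j := by
  simp [prevOcc, List.max?_eq_some_iff]

theorem prevOcc_eq_none_iff : prevOcc w i = none ↔ ∀ j < i, w[j]? ≠ w[i]? := by
  simp [prevOcc, List.max?_eq_none_iff, List.filter_eq_nil_iff]

theorem prevOcc_cons_succ_of_some (h : prevOcc u i = some j) :
    prevOcc (c :: u) (i + 1) = some (j + 1) := by
  rw [prevOcc_eq_some_iff] at h ⊢
  refine ⟨⟨by omega, by simpa using h.1.2⟩, ?_⟩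
  rintro (_ | k) hk hkk
  · omega
  · have := h.2 k (by omega) (by simpa using hkk)
    omega

theorem prevOcc_cons_succ_of_none_of_eq (h : prevOcc u i = none) (hc : u[i]? = some c) :
    prevOcc (c :: u) (i + 1) = some 0 := by
  rw [prevOcc_eq_none_iff] at h
  rw [prevOcc_eq_some_iff]
  refine ⟨⟨by omega, by simp [hc]⟩, ?_⟩
  rintro (_ | k) hk hkk
  · rfl
  · exact absurd (by simpa using hkk) (h k (by omega))

theorem prevOcc_cons_succ_of_none_of_ne (h : prevOcc u i = none) (hc : u[i]? ≠ some c) :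
    prevOcc (c :: u) (i + 1) = none := by
  rw [prevOcc_eq_none_iff] at h ⊢
  rintro (_ | k) hk
  · simpa using fun h' => hc h'.symm
  · simpa using h k (by omega)

end PrevOcc

section Penc

variable {u : List PSym} {i : ℕ}

theorem pencSym_cons_s_succ (a : ℕ) : pencSym (PSym.s a :: u) (i + 1) = pencSym u i := by
  unfold pencSym
  rw [List.getElem?_cons_succ]
  rcases hu : u[i]? with _ | _ | b
  · rfl
  · rfl
  · rcases hp : prevOcc u i with _ | j
    · rw [prevOcc_cons_succ_of_none_of_ne hp (by simp [hu])]
    · simp [prevOcc_cons_succ_of_some hp]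

theorem pencSym_cons_p_succ_of_idxOf_ne (a : ℕ) (h : u.idxOf (PSym.p a) ≠ i) :
    pencSym (PSym.p a :: u) (i + 1) = pencSym u i := by
  unfold pencSym
  rw [List.getElem?_cons_succ]
  rcases hu : u[i]? with _ | _ | b
  · rfl
  · rfl
  · rcases hp : prevOcc u i with _ | j
    · rw [prevOcc_cons_succ_of_none_of_ne hp fun hc => h (List.idxOf_eq_of_getElem? hc
        fun j hj => hc ▸ prevOcc_eq_none_iff.mp hp j hj)]
    · simp [prevOcc_cons_succ_of_some hp]

theorem pencSym_cons_p_succ_idxOf (a : ℕ) (h : PSym.p a ∈ u) :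
    pencSym (PSym.p a :: u) (u.idxOf (PSym.p a) + 1) = Enc.fin (u.idxOf (PSym.p a) + 1) := by
  have hu := List.getElem?_idxOf h
  have hfirst : prevOcc u (u.idxOf (PSym.p a)) = none :=
    prevOcc_eq_none_iff.mpr fun j hj => hu ▸ List.getElem?_ne_of_lt_idxOf hj
  unfold pencSym
  simp [hu, prevOcc_cons_succ_of_none_of_eq hfirst hu]

theorem penc_cons_s (a : ℕ) (u : List PSym) : penc (PSym.s a :: u) = Enc.s a :: penc u := by
  simp only [penc, List.length_cons, List.range_succ_eq_map, List.map_cons, List.map_map,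
    Function.comp_def, pencSym_cons_s_succ]
  simp [pencSym]

theorem penc_cons_p (a : ℕ) (u : List PSym) :
    penc (PSym.p a :: u) =
      Enc.inf :: (penc u).set (u.idxOf (PSym.p a)) (Enc.fin (u.idxOf (PSym.p a) + 1)) := by
  apply List.ext_getElem (by simp [penc])
  rintro (_ | k) h₁ h₂
  · simp [penc, pencSym, prevOcc]
  · simp only [penc, List.getElem_map, List.getElem_range, List.getElem_cons_succ,
      List.getElem_set]
    split_ifs with hk
    · subst hk
      exact pencSym_cons_p_succ_idxOf a (List.idxOf_lt_length_iff.mp (by simpa [penc] using h₁))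
    · exact pencSym_cons_p_succ_of_idxOf_ne a hk

theorem lt_fin_succ_of_getElem?_penc {e : Enc} (h : (penc u)[i]? = some e) (he : e ≠ Enc.inf) :
    e < Enc.fin (i + 1) := by
  rcases e with a | d | _
  · exact Enc.s_lt_fin _ _
  · obtain ⟨hi, hd⟩ := List.getElem?_eq_some_iff.mp h
    simp only [penc, List.getElem_map, List.getElem_range] at hd
    unfold pencSym at hd
    split at hd <;> try split at hd
    all_goals cases hd
    exact Enc.fin_lt_fin (by omega)
  · exact absurd rfl he

end Penc

section DistinctP

def PSym.param? : PSym → Option ℕ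
  | PSym.p a => some a
  | PSym.s _ => none

theorem distinctP_eq_card (w : List PSym) :
    distinctP w = (w.filterMap PSym.param?).toFinset.card := by
  rw [List.card_toFinset]
  rfl

theorem mem_filterMap_param? {b : ℕ} {l : List PSym} :
    b ∈ l.filterMap PSym.param? ↔ PSym.p b ∈ l := by
  refine ⟨fun h => ?_, fun h => List.mem_filterMap.mpr ⟨_, h, rfl⟩⟩
  obtain ⟨_ | c, hc, hv⟩ := List.mem_filterMap.mp h <;> cases hv
  exact hc

theorem distinctP_append_s (l : List PSym) (b : ℕ) :
    distinctP (l ++ [PSym.s b]) = distinctP l := by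
  simp only [distinctP_eq_card, List.filterMap_append, List.filterMap_cons, List.filterMap_nil,
    PSym.param?, List.append_nil]

theorem distinctP_append_p (l : List PSym) (b : ℕ) :
    distinctP (l ++ [PSym.p b]) = distinctP l + if PSym.p b ∈ l then 0 else 1 := by
  simp only [distinctP_eq_card, List.filterMap_append, List.filterMap_cons, List.filterMap_nil,
    PSym.param?, List.toFinset_append, List.toFinset_cons, List.toFinset_nil,
    Finset.union_insert, Finset.union_empty, Finset.card_insert_eq_ite, List.mem_toFinset,
    mem_filterMap_param?]
  split_ifs <;> rfl

theorem distinctP_cons_p (a : ℕ) (l : List PSym) :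
    distinctP (PSym.p a :: l) = distinctP l + if PSym.p a ∈ l then 0 else 1 := by
  simp only [distinctP_eq_card, List.filterMap_cons, PSym.param?, List.toFinset_cons,
    Finset.card_insert_eq_ite, List.mem_toFinset, mem_filterMap_param?]
  split_ifs <;> rfl

end DistinctP

section FceRank

variable {u : List PSym} {k : ℕ}

theorem pencSym_eq_inf_iff {b : ℕ} (hu : u[k]? = some (PSym.p b)) :
    pencSym u k = Enc.inf ↔ PSym.p b ∉ u.take k := by
  rw [List.mem_take_iff_getElem?]
  unfold pencSym
  rw [hu]
  rcases hp : prevOcc u k with _ | j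
  · simpa [hu] using prevOcc_eq_none_iff.mp hp
  · have ⟨hj, hj'⟩ := (prevOcc_eq_some_iff.mp hp).1
    simpa using ⟨j, hj, hj'.trans hu⟩

theorem count_inf_take_penc (hk : k ≤ u.length) :
    ((penc u).take k).count Enc.inf = distinctP (u.take k) := by
  induction k with
  | zero => rfl
  | succ k ih =>
    have hk' : k < u.length := hk
    have hu : u[k]? = some u[k] := List.getElem?_eq_getElem hk'
    have hpenc : (penc u)[k]? = some (pencSym u k) := by simp [penc, hk']
    rw [List.take_add_one, List.take_add_one, hpenc, hu, Option.toList_some, Option.toList_some,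
      List.count_append, List.count_singleton, ih (by omega)]
    rcases hc : u[k] with b | b
    · simp [pencSym, hu, hc, distinctP_append_s]
    · rw [hc] at hu
      rw [distinctP_append_p]
      by_cases hmem : PSym.p b ∈ u.take k
      · simp [hmem, (pencSym_eq_inf_iff hu).not.mpr (not_not.mpr hmem)]
      · simp [hmem, (pencSym_eq_inf_iff hu).mpr hmem]

theorem fceRank_p (a : ℕ) (u : List PSym) :
    fceRank (PSym.p a :: u) = ((penc u).take (u.idxOf (PSym.p a))).count Enc.inf + 1 := by
  set m := u.idxOf (PSym.p a)
  have hnot : PSym.p a ∉ u.take m := List.not_mem_take_idxOf u _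
  have htake : (PSym.p a :: u).take (min (PSym.p a :: u).length (2 + m)) =
      PSym.p a :: (u.take m ++ u[m]?.toList) := by
    rw [← List.take_add_one, List.length_cons,
      show min (u.length + 1) (2 + m) = min (m + 1) u.length + 1 by omega,
      List.take_succ_cons, ← List.take_eq_take_min]
  change distinctP ((PSym.p a :: u).take (min (PSym.p a :: u).length (2 + m))) = _
  rw [htake, count_inf_take_penc List.idxOf_le_length]
  by_cases ha : PSym.p a ∈ u
  · simp [List.getElem?_idxOf ha, distinctP_cons_p, distinctP_append_p, hnot, m]
  · simp [List.getElem?_eq_none (List.idxOf_eq_length ha).ge, distinctP_cons_p, hnot, m]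

end FceRank

theorem lex_set_of_count_inf_eq {α β : List Enc} (h : List.Lex (· < ·) α β) {mα mβ : ℕ}
    {vα vβ : Enc} (hα : mα < α.length → α[mα]? = some Enc.inf)
    (hcount : (α.take mα).count Enc.inf = (β.take mβ).count Enc.inf)
    (hv : mα = mβ → vα = vβ) (hvβ : ∀ e, α[mβ]? = some e → e ≠ Enc.inf → e < vβ) :
    List.Lex (· < ·) (α.set mα vα) (β.set mβ vβ) := by
  induction h generalizing mα mβ with
  | nil => cases mβ <;> exact List.Lex.nil
  | @rel a l₁ b l₂ hab =>
    have ha : a ≠ Enc.inf := fun h => Enc.not_inf_lt b (h ▸ hab)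
    obtain ⟨mα, rfl⟩ : ∃ k, mα = k + 1 :=
      Nat.exists_eq_add_one_of_ne_zero fun h => ha (by simpa [h] using hα)
    cases mβ with
    | zero => exact List.Lex.rel (hvβ a rfl ha)
    | succ => exact List.Lex.rel hab
  | @cons a l₁ l₂ h ih =>
    cases mα with
    | zero =>
      have ha : a = Enc.inf := by simpa using hα (by simp)
      cases mβ with
      | zero => exact hv rfl ▸ List.Lex.cons h
      | succ => simp [ha] at hcount
    | succ mα =>
      cases mβ with
      | zero =>
        have ha : a ≠ Enc.inf := by rintro rfl; simp at hcount
        exact List.Lex.rel (hvβ a rfl ha)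
      | succ mβ =>
        simp only [List.take_succ_cons, List.count_cons] at hcount
        exact List.Lex.cons (ih (fun h => hα (by simpa using h)) (by omega)
          (fun h => hv (by rw [h])) hvβ)

theorem penc_getElem?_idxOf_p {a : ℕ} {u : List PSym} (h : PSym.p a ∈ u) :
    (penc u)[u.idxOf (PSym.p a)]? = some Enc.inf := by
  have hu := List.getElem?_idxOf h
  rw [← (pencSym_eq_inf_iff hu).mpr (List.not_mem_take_idxOf _ _)]
  simp [penc, List.idxOf_lt_length_iff.mpr h]

theorem penc_cons_lex_of_fce_eq {c d : PSym} {u v : List PSym}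
    (hfce : fce (c :: u) = fce (d :: v)) (h : lexLt (penc u) (penc v)) :
    lexLt (penc (c :: u)) (penc (d :: v)) := by
  rcases c with a | a <;> rcases d with b | b
  · obtain rfl : a = b := by simpa [fce] using hfce
    rw [penc_cons_s, penc_cons_s]
    exact List.Lex.cons h
  · simp [fce] at hfce
  · simp [fce] at hfce
  · have hcount : fceRank (PSym.p a :: u) = fceRank (PSym.p b :: v) := by simpa [fce] using hfce
    rw [fceRank_p, fceRank_p, Nat.add_right_cancel_iff] at hcount
    rw [penc_cons_p, penc_cons_p]
    refine List.Lex.cons (lex_set_of_count_inf_eq h (fun hlt => ?_) hcount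
      (fun h => by rw [h]) fun e he hne => lt_fin_succ_of_getElem?_penc he hne)
    exact penc_getElem?_idxOf_p (List.idxOf_lt_length_iff.mp (by simpa [penc] using hlt))

theorem penc_drop_lex_of_fce_eq {T : List PSym} {k l : ℕ} (hk : k < T.length) (hl : l < T.length)
    (hfce : fce (T.drop k) = fce (T.drop l))
    (h : lexLt (penc (T.drop (k + 1))) (penc (T.drop (l + 1)))) :
    lexLt (penc (T.drop k)) (penc (T.drop l)) := by
  rw [List.drop_eq_getElem_cons hk, List.drop_eq_getElem_cons hl] at hfce ⊢
  exact penc_cons_lex_of_fce_eq hfce h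

theorem eq_s_of_fce_cons_eq_s {c : PSym} {u : List PSym} {a : ℕ} (h : fce (c :: u) = Enc.s a) :
    c = PSym.s a := by
  rcases c with b | b <;> simp [fce] at h
  rw [h]

theorem fce_ite_drop_sub_one_eq_s_zero_iff {T : List PSym}
    (huniq : ∀ i, i + 1 < T.length → T[i]? ≠ some (PSym.s 0)) {k : ℕ} (hk : k < T.length) :
    fce (if k = 0 then [PSym.s 0] else T.drop (k - 1)) = Enc.s 0 ↔ k = 0 := by
  split_ifs with h0
  · simp [h0, fce]
  · rw [List.drop_eq_getElem_cons (by omega)]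
    refine iff_of_false (fun hf => huniq (k - 1) (by omega) ?_) h0
    rw [List.getElem?_eq_getElem (by omega), eq_s_of_fce_cons_eq_s hf]

theorem lt_of_rel_of_sorted {β : Type*} {r : β → β → Prop} [Std.Asymm r] {n : ℕ} {f : ℕ → β}
    {Rinv R : ℕ → ℕ} (hsorted : ∀ i j, i < j → j < n → r (f (Rinv i)) (f (Rinv j)))
    (hRdom : ∀ p < n, R p < n) (hR : ∀ p < n, Rinv (R p) = p) {p q : ℕ} (hp : p < n)
    (hq : q < n) (h : r (f p) (f q)) : R p < R q := by
  rcases lt_trichotomy (R p) (R q) with hlt | heq | hgt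
  · exact hlt
  · obtain rfl : p = q := by rw [← hR p hp, heq, hR q hq]
    exact absurd h (asymm h)
  · have hqp := hsorted _ _ hgt (hRdom p hp)
    rw [hR q hq, hR p hp] at hqp
    exact absurd h (asymm hqp)

theorem stmt13_general (T : List PSym) (n : ℕ) (hn : n = T.length)
    (huniq : ∀ i, i + 1 < n → T[i]? ≠ some (PSym.s 0))
    -- `Rinv i` is the (0-based) starting position of the lexicographically
    -- (i+1)-st p-encoded suffix of `T`
    (Rinv : ℕ → ℕ) (hdom : ∀ i < n, Rinv i < n)
    (hsorted : ∀ i j, i < j → j < n →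
      lexLt (penc (T.drop (Rinv i))) (penc (T.drop (Rinv j))))
    -- `R` is the rank function, the inverse of `Rinv`
    (R : ℕ → ℕ) (hRdom : ∀ p < n, R p < n)
    (hRinv : ∀ i < n, R (Rinv i) = i) (hR : ∀ p < n, Rinv (R p) = p)
    -- the pBWT array `L`:  L i = fce (T[R⁻¹(i)−1..])  (with T[0..] := $)
    (L : ℕ → Enc)
    (hL : ∀ i < n, L i = fce (if Rinv i = 0 then [PSym.s 0] else T.drop (Rinv i - 1)))
    -- the LF-mapping
    (LF : ℕ → ℕ)
    (hLF : ∀ i < n, LF i = if Rinv i = 0 then R (n - 1) else R (Rinv i - 1))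
    (i j : ℕ) (hij : i < j) (hjn : j < n) (heq : L i = L j) :
    LF i < LF j := by
  subst hn
  have hin : i < T.length := hij.trans hjn
  have hne : Rinv i ≠ Rinv j := fun h => hij.ne (by rw [← hRinv i hin, h, hRinv j hjn])
  have hdollar : ∀ k < T.length, L k = Enc.s 0 ↔ Rinv k = 0 := fun k hk =>
    hL k hk ▸ fce_ite_drop_sub_one_eq_s_zero_iff huniq (hdom k hk)
  have hi0 : Rinv i ≠ 0 := fun h =>
    hne (h.trans ((hdollar j hjn).mp (heq ▸ (hdollar i hin).mpr h)).symm)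
  have hj0 : Rinv j ≠ 0 := fun h =>
    hne (((hdollar i hin).mp (heq ▸ (hdollar j hjn).mpr h)).trans h.symm)
  obtain ⟨p, hp⟩ := Nat.exists_eq_add_one_of_ne_zero hi0
  obtain ⟨q, hq⟩ := Nat.exists_eq_add_one_of_ne_zero hj0
  have hpn := hdom i hin
  have hqn := hdom j hjn
  rw [hL i hin, hL j hjn, if_neg hi0, if_neg hj0, hp, hq, Nat.add_sub_cancel,
    Nat.add_sub_cancel] at heq
  rw [hLF i hin, hLF j hjn, if_neg hi0, if_neg hj0, hp, hq, Nat.add_sub_cancel,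
    Nat.add_sub_cancel]
  have hsuff := hsorted i j hij hjn
  rw [hp, hq] at hsuff
  exact lt_of_rel_of_sorted (r := List.Lex (· < ·)) (f := fun k => penc (T.drop k)) hsorted
    hRdom hR (by omega) (by omega)
    (penc_drop_lex_of_fce_eq (by omega) (by omega) heq hsuff)

theorem stmt13 (T : List PSym) (n : ℕ) (hn : n = T.length)
    -- `$` (modelled as `PSym.s 0`, the smallest symbol) is the end-marker of `T`
    (hend : T.getLast? = some (PSym.s 0))
    (huniq : ∀ i, i + 1 < n → T[i]? ≠ some (PSym.s 0))
    -- `Rinv i` is the (0-based) starting position of the lexicographically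
    -- (i+1)-st p-encoded suffix of `T`
    (Rinv : ℕ → ℕ) (hdom : ∀ i < n, Rinv i < n)
    (hsorted : ∀ i j, i < j → j < n →
      lexLt (penc (T.drop (Rinv i))) (penc (T.drop (Rinv j))))
    -- `R` is the rank function, the inverse of `Rinv`
    (R : ℕ → ℕ) (hRdom : ∀ p < n, R p < n)
    (hRinv : ∀ i < n, R (Rinv i) = i) (hR : ∀ p < n, Rinv (R p) = p)
    -- the pBWT array `L`:  L i = fce (T[R⁻¹(i)−1..])  (with T[0..] := $)
    (L : ℕ → Enc)
    (hL : ∀ i < n, L i = fce (if Rinv i = 0 then [PSym.s 0] else T.drop (Rinv i - 1)))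
    -- the LF-mapping
    (LF : ℕ → ℕ)
    (hLF : ∀ i < n, LF i = if Rinv i = 0 then R (n - 1) else R (Rinv i - 1))
    (i j : ℕ) (hij : i < j) (hjn : j < n) (heq : L i = L j) :
    LF i < LF j :=
  stmt13_general T n hn huniq Rinv hdom hsorted R hRdom hRinv hR L hL LF hLF i j hij hjn heq
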